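/- For all real numbers x, y, z, the function x ↦ ℛ(x,y,z) is differentiable and its derivative in x equals (1/2)·(H(z, x+y) + H(z, x−y)). -/

import Mathlib

/-!
Since `1 / (1 + e^s) = (1 - tanh (s / 2)) / 2` and `tanh p + tanh q = sinh (p + q) / (cosh p cosh q)`,
a pair of logistic terms satisfies `1 / (1 + e^(a+b)) + 1 / (1 + e^(a-b)) = 1 - sinh a / (cosh b + cosh a)`.
The four terms of `H(z, x+y) + H(z, x-y)` pair up with `b = y/2` and `a = (x+z)/2`, `a = (z-x)/2`,
and the two resulting quotients are the logarithmic derivatives of the numerator and the denominator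
in `ℛ`.
-/

noncomputable section

/-- The McShane–Mirzakhani function
`ℛ(x,y,z) = x − log((cosh(y/2) + cosh((x+z)/2))/(cosh(y/2) + cosh((x−z)/2)))`. -/
def Rfun (x y z : ℝ) : ℝ :=
  x - Real.log ((Real.cosh (y / 2) + Real.cosh ((x + z) / 2)) /
      (Real.cosh (y / 2) + Real.cosh ((x - z) / 2)))

/-- The kernel `H(x,y) = 1/(1 + e^{(x+y)/2}) + 1/(1 + e^{(x−y)/2})`. -/
def Hker (x y : ℝ) : ℝ :=
  1 / (1 + Real.exp ((x + y) / 2)) + 1 / (1 + Real.exp ((x - y) / 2))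

open Real

lemma one_sub_sinh_div_cosh_add_cosh (a b : ℝ) :
    1 - sinh a / (cosh b + cosh a) = 1 / (1 + exp (a + b)) + 1 / (1 + exp (a - b)) := by
  have := exp_pos a
  have := exp_pos b
  rw [sinh_eq, cosh_eq, cosh_eq, exp_add, exp_sub, exp_neg, exp_neg]
  field_simp
  ring

lemma cosh_add_cosh_pos (a b : ℝ) : 0 < cosh a + cosh b :=
  add_pos (cosh_pos a) (cosh_pos b)

lemma hasDerivAt_log_cosh_add_cosh (b u : ℝ) :
    HasDerivAt (fun v => log (cosh b + cosh v)) (sinh u / (cosh b + cosh u)) u :=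
  ((hasDerivAt_cosh u).const_add _).log (cosh_add_cosh_pos b u).ne'

lemma Rfun_eq_sub_log_sub_log (x y z : ℝ) :
    Rfun x y z =
      x - (log (cosh (y / 2) + cosh ((x + z) / 2)) - log (cosh (y / 2) + cosh ((x - z) / 2))) := by
  rw [Rfun, log_div (cosh_add_cosh_pos _ _).ne' (cosh_add_cosh_pos _ _).ne']

lemma half_mul_Hker_add_Hker (x y z : ℝ) :
    (1 / 2) * (Hker z (x + y) + Hker z (x - y)) =
      1 - (sinh ((x + z) / 2) / (cosh (y / 2) + cosh ((x + z) / 2)) * (1 / 2)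
        - sinh ((x - z) / 2) / (cosh (y / 2) + cosh ((x - z) / 2)) * (1 / 2)) := by
  have hplus := one_sub_sinh_div_cosh_add_cosh ((x + z) / 2) (y / 2)
  have hminus := one_sub_sinh_div_cosh_add_cosh ((z - x) / 2) (y / 2)
  rw [show (z - x) / 2 = -((x - z) / 2) by ring, sinh_neg, cosh_neg] at hminus
  unfold Hker
  ring_nf at hplus hminus ⊢
  linarith

/-- For all `x, y, z`, the function `x ↦ ℛ(x,y,z)` has derivative
`(1/2)(H(z, x+y) + H(z, x−y))` at `x`. -/
theorem Rfun_hasDerivAt (x y z : ℝ) :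
    HasDerivAt (fun u : ℝ => Rfun u y z)
      ((1 / 2) * (Hker z (x + y) + Hker z (x - y))) x := by
  have hplus : HasDerivAt (fun u : ℝ => (u + z) / 2) (1 / 2) x :=
    ((hasDerivAt_id x).add_const z).div_const 2
  have hminus : HasDerivAt (fun u : ℝ => (u - z) / 2) (1 / 2) x :=
    ((hasDerivAt_id x).sub_const z).div_const 2
  have h := (hasDerivAt_id x).sub
    (((hasDerivAt_log_cosh_add_cosh (y / 2) _).comp x hplus).sub
      ((hasDerivAt_log_cosh_add_cosh (y / 2) _).comp x hminus))
  simp only [half_mul_Hker_add_Hker, Rfun_eq_sub_log_sub_log]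
  exact h

end
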